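/- Let 0 < s < 1 and let m₁, m₂ ∈ ℕ. Then there exists a constant C > 0 (depending only on s, m₁, m₂) such that for all ξ, η ∈ ℝ with ξ ≠ 0, η ≠ 0 and |ξ| ≥ 4|η|: |∂_ξ^{m₁} ∂_η^{m₂} M(ξ,η)| ≤ C · (|ξ|^{2s − m₁ − m₂} + |η|^{2s+1−m₂} / |ξ|^{m₁+1}). -/

import Mathlib

open MeasureTheory Real Filter

/-- `M(ξ,η) = ∫₀¹ |(ξ−η)τ + η|^{2s} dτ`. -/
noncomputable def Mker (s ξ η : ℝ) : ℝ := ∫ τ in (0:ℝ)..1, |(ξ - η) * τ + η| ^ (2 * s)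

noncomputable def gg (s x : ℝ) : ℝ := |x| ^ (2*s) * x

lemma hasDerivAt_gg {s : ℝ} (hs : 0 < s) (x : ℝ) :
    HasDerivAt (gg s) ((2*s+1) * |x| ^ (2*s)) x := by
  rcases lt_trichotomy x 0 with hx | hx | hx
  · have h2 : HasDerivAt (fun y : ℝ => (-y) ^ (2*s+1))
        (((2*s+1) * (-x) ^ (2*s+1-1)) * (-1)) x :=
      (Real.hasDerivAt_rpow_const (p := 2*s+1) (Or.inl (neg_ne_zero.2 hx.ne))).comp x
        (hasDerivAt_neg x)
    have h1 : HasDerivAt (fun y : ℝ => -((-y) ^ (2*s+1)))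
        ((2*s+1) * (-x) ^ (2*s)) x := by
      have := h2.fun_neg
      refine this.congr_deriv ?_
      rw [show 2*s+1-1 = 2*s by ring]
      ring
    have h3 : HasDerivAt (gg s) ((2*s+1) * (-x) ^ (2*s)) x := by
      apply h1.congr_of_eventuallyEq
      filter_upwards [eventually_lt_nhds hx] with y hy
      have hy' : (0:ℝ) < -y := by linarith
      unfold gg
      rw [abs_of_neg hy, Real.rpow_add_one hy'.ne']
      ring
    rwa [abs_of_neg hx]
  · subst hx
    rw [abs_zero, Real.zero_rpow (by positivity), mul_zero]
    rw [hasDerivAt_iff_tendsto_slope]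
    have hcont : Tendsto (fun y : ℝ => |y| ^ (2*s)) (nhds 0) (nhds 0) := by
      have h1 : ContinuousAt (fun t : ℝ => t ^ (2*s)) (|(0:ℝ)|) :=
        Real.continuousAt_rpow_const _ _ (Or.inr (by positivity))
      have := h1.comp continuous_abs.continuousAt
      simpa [Function.comp_def, Real.zero_rpow (by positivity : (2*s) ≠ 0)] using this.tendsto
    apply (hcont.mono_left nhdsWithin_le_nhds).congr'
    filter_upwards [self_mem_nhdsWithin] with y hy
    have hy' : (y:ℝ) ≠ 0 := hy
    simp [slope, gg, hy']
    field_simp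
  · have h1 : HasDerivAt (fun y : ℝ => y ^ (2*s+1)) ((2*s+1) * x ^ (2*s+1-1)) x :=
      Real.hasDerivAt_rpow_const (Or.inl hx.ne')
    have h2 : HasDerivAt (gg s) ((2*s+1) * x ^ (2*s)) x := by
      have h3 : HasDerivAt (gg s) ((2*s+1) * x ^ (2*s+1-1)) x := by
        apply h1.congr_of_eventuallyEq
        filter_upwards [eventually_gt_nhds hx] with y hy
        unfold gg
        rw [abs_of_pos hy, Real.rpow_add_one hy.ne']
      rwa [show 2*s+1-1 = 2*s by ring] at h3
    rwa [abs_of_pos hx]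

noncomputable def GG (s : ℝ) (j : ℕ) : ℝ → ℝ := iteratedDeriv j (gg s)

lemma GG_succ (s : ℝ) (j : ℕ) : GG s (j+1) = deriv (GG s j) := iteratedDeriv_succ

noncomputable def Ac (s : ℝ) : ℕ → ℝ
  | 0 => 1
  | (j+1) => Ac s j * (2*s+1-j)

lemma GG_pos (s : ℝ) (j : ℕ) : ∀ x : ℝ, 0 < x → GG s j x = Ac s j * x ^ (2*s+1-j) := by
  induction j with
  | zero =>
    intro x hx
    simp only [GG, iteratedDeriv_zero, Ac, gg, one_mul, Nat.cast_zero, sub_zero]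
    rw [abs_of_pos hx, Real.rpow_add_one hx.ne']
    try ring
  | succ j ih =>
    intro x hx
    have he : GG s j =ᶠ[nhds x] (fun y => Ac s j * y ^ (2*s+1-j)) := by
      filter_upwards [eventually_gt_nhds hx] with y hy using ih y hy
    have hd : HasDerivAt (fun y : ℝ => Ac s j * y ^ (2*s+1-j))
        (Ac s j * ((2*s+1-j) * x ^ (2*s+1-j-1))) x :=
      (Real.hasDerivAt_rpow_const (Or.inl hx.ne')).const_mul _
    rw [GG_succ, he.deriv_eq, hd.deriv]
    rw [Ac, show 2*s+1-j-1 = 2*s+1-(j+1:ℕ) by push_cast; ring]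
    ring

lemma GG_neg (s : ℝ) (j : ℕ) :
    ∀ x : ℝ, x < 0 → GG s j x = (-1)^(j+1) * Ac s j * (-x) ^ (2*s+1-j) := by
  induction j with
  | zero =>
    intro x hx
    have hx' : (0:ℝ) < -x := by linarith
    simp only [GG, iteratedDeriv_zero, Ac, gg, Nat.cast_zero, sub_zero, pow_one]
    rw [abs_of_neg hx, Real.rpow_add_one hx'.ne']
    ring
  | succ j ih =>
    intro x hx
    have hx' : (0:ℝ) < -x := by linarith
    have he : GG s j =ᶠ[nhds x] (fun y => (-1)^(j+1) * Ac s j * (-y) ^ (2*s+1-j)) := by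
      filter_upwards [eventually_lt_nhds hx] with y hy using ih y hy
    have hd : HasDerivAt (fun y : ℝ => (-1)^(j+1) * Ac s j * (-y) ^ (2*s+1-j))
        (((-1:ℝ))^(j+1) * Ac s j * (((2*s+1-j) * (-x) ^ (2*s+1-j-1)) * (-1))) x := by
      exact (((Real.hasDerivAt_rpow_const (p := 2*s+1-j)
        (Or.inl hx'.ne')).comp x (hasDerivAt_neg x)).const_mul _)
    rw [GG_succ, he.deriv_eq, hd.deriv]
    rw [Ac, show 2*s+1-j-1 = 2*s+1-(j+1:ℕ) by push_cast; ring, pow_succ]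
    ring

lemma GG_abs (s : ℝ) (j : ℕ) {x : ℝ} (hx : x ≠ 0) :
    |GG s j x| = |Ac s j| * |x| ^ (2*s+1-j) := by
  rcases hx.lt_or_gt with h | h
  · rw [GG_neg s j x h, abs_of_neg h, abs_mul, abs_mul]
    have : |(-x : ℝ) ^ (2*s+1-j)| = (-x) ^ (2*s+1-j) :=
      abs_of_nonneg (Real.rpow_nonneg (by linarith) _)
    rw [this]
    simp
  · rw [GG_pos s j x h, abs_of_pos h, abs_mul]
    have : |(x : ℝ) ^ (2*s+1-j)| = x ^ (2*s+1-j) :=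
      abs_of_nonneg (Real.rpow_nonneg (by linarith) _)
    rw [this]

lemma GG_hasDerivAt (s : ℝ) (j : ℕ) {x : ℝ} (hx : x ≠ 0) :
    HasDerivAt (GG s j) (GG s (j+1) x) x := by
  rcases hx.lt_or_gt with h | h
  · have he : GG s j =ᶠ[nhds x] (fun y => (-1)^(j+1) * Ac s j * (-y) ^ (2*s+1-j)) := by
      filter_upwards [eventually_lt_nhds h] with y hy using GG_neg s j y hy
    have hx' : (0:ℝ) < -x := by linarith
    have hd : HasDerivAt (fun y : ℝ => (-1)^(j+1) * Ac s j * (-y) ^ (2*s+1-j))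
        (((-1:ℝ))^(j+1) * Ac s j * (((2*s+1-j) * (-x) ^ (2*s+1-j-1)) * (-1))) x :=
      (((Real.hasDerivAt_rpow_const (p := 2*s+1-j)
        (Or.inl hx'.ne')).comp x (hasDerivAt_neg x)).const_mul _)
    have := hd.congr_of_eventuallyEq he
    refine this.congr_deriv ?_
    rw [GG_succ, he.deriv_eq, hd.deriv]
  · have he : GG s j =ᶠ[nhds x] (fun y => Ac s j * y ^ (2*s+1-j)) := by
      filter_upwards [eventually_gt_nhds h] with y hy using GG_pos s j y hy
    have hd : HasDerivAt (fun y : ℝ => Ac s j * y ^ (2*s+1-j))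
        (Ac s j * ((2*s+1-j) * x ^ (2*s+1-j-1))) x :=
      (Real.hasDerivAt_rpow_const (Or.inl h.ne')).const_mul _
    have := hd.congr_of_eventuallyEq he
    refine this.congr_deriv ?_
    rw [GG_succ, he.deriv_eq, hd.deriv]

lemma mker_eq {s : ℝ} (hs : 0 < s) {ξ η : ℝ} (hne : ξ ≠ η) :
    Mker s ξ η = (gg s ξ - gg s η) / ((2*s+1) * (ξ - η)) := by
  have ha : ξ - η ≠ 0 := sub_ne_zero.2 hne
  have hc : (2*s+1) ≠ 0 := by positivity
  have hderiv : ∀ τ ∈ Set.uIcc (0:ℝ) 1,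
      HasDerivAt (fun τ => gg s ((ξ-η)*τ + η) / ((2*s+1)*(ξ-η)))
        (|(ξ - η) * τ + η| ^ (2*s)) τ := by
    intro τ _
    have h1 : HasDerivAt (fun τ : ℝ => (ξ-η)*τ + η) (ξ-η) τ := by
      simpa using ((hasDerivAt_id τ).const_mul (ξ-η)).add_const η
    have h2 := ((hasDerivAt_gg hs ((ξ-η)*τ + η)).comp τ h1).div_const ((2*s+1)*(ξ-η))
    refine h2.congr_deriv ?_
    field_simp
  have hint : IntervalIntegrable (fun τ => |(ξ - η) * τ + η| ^ (2*s)) volume 0 1 := by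
    apply Continuous.intervalIntegrable
    have : Continuous (fun x : ℝ => x ^ (2*s)) := by
      fun_prop (disch := positivity)
    exact (this.comp continuous_abs).comp (by continuity)
  have := intervalIntegral.integral_eq_sub_of_hasDerivAt hderiv hint
  rw [Mker, show (2:ℝ)*s = 2*s from rfl]
  rw [this]
  field_simp
  simp

lemma inner_formula {s : ℝ} (hs : 0 < s) (m₂ : ℕ) :
    ∃ a b : ℕ → ℝ, (∀ j, 0 < j → a j = 0) ∧ ∀ ξ η : ℝ, η ≠ 0 → ξ ≠ η →
      iteratedDeriv m₂ (fun η' => Mker s ξ η') η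
      = (∑ j ∈ Finset.range 1, a j * GG s j ξ * (ξ-η)^((j:ℤ)-1-(m₂:ℤ)))
      + (∑ k ∈ Finset.range (m₂+1), b k * GG s k η * (ξ-η)^((k:ℤ)-1-(m₂:ℤ))) := by
  induction m₂ with
  | zero =>
    refine ⟨fun j => if j = 0 then (2*s+1)⁻¹ else 0,
      fun k => if k = 0 then -(2*s+1)⁻¹ else 0,
      fun j hj => by simp [Nat.pos_iff_ne_zero.mp hj], ?_⟩
    intro ξ η hη hne
    have hX : ξ - η ≠ 0 := sub_ne_zero.2 hne
    have hc : 2*s+1 ≠ 0 := by positivity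
    simp only [iteratedDeriv_zero, Finset.sum_range_one, GG, Nat.cast_zero]
    rw [mker_eq hs hne]
    norm_num
    field_simp
    ring
  | succ m ih =>
    obtain ⟨a, b, ha, hab⟩ := ih
    refine ⟨fun j => a j * ((m:ℝ)+1),
      fun k => (if k = 0 then 0 else b (k-1)) + b k * ((m:ℝ)+1-(k:ℝ)),
      fun j hj => by simp [ha j hj], ?_⟩
    intro ξ η hη hne
    have hX : ξ - η ≠ 0 := sub_ne_zero.2 hne
    rw [iteratedDeriv_succ]
    have he : iteratedDeriv m (fun η' => Mker s ξ η') =ᶠ[nhds η]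
        (fun η' => (∑ j ∈ Finset.range 1, a j * GG s j ξ * (ξ-η')^((j:ℤ)-1-(m:ℤ)))
          + (∑ k ∈ Finset.range (m+1), b k * GG s k η' * (ξ-η')^((k:ℤ)-1-(m:ℤ)))) := by
      filter_upwards [eventually_ne_nhds hη, eventually_ne_nhds (Ne.symm hne)] with y h1 h2
      exact hab ξ y h1 (Ne.symm h2)
    rw [he.deriv_eq]
    have hone : HasDerivAt (fun η' : ℝ => ξ - η') (-1) η := by
      simpa using (hasDerivAt_id η).const_sub ξ
    have hA : ∀ j ∈ Finset.range 1, HasDerivAt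
        (fun η' => a j * GG s j ξ * (ξ-η')^((j:ℤ)-1-(m:ℤ)))
        (a j * GG s j ξ * (((j:ℝ)-1-(m:ℝ)) * (ξ-η)^((j:ℤ)-1-(m:ℤ)-1) * (-1))) η := by
      intro j _
      have h2 := ((hasDerivAt_zpow ((j:ℤ)-1-(m:ℤ)) (ξ-η) (Or.inl hX)).comp η hone).const_mul
        (a j * GG s j ξ)
      refine h2.congr_deriv ?_
      push_cast
      ring
    have hB : ∀ k ∈ Finset.range (m+1), HasDerivAt
        (fun η' => b k * GG s k η' * (ξ-η')^((k:ℤ)-1-(m:ℤ)))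
        (b k * GG s (k+1) η * (ξ-η)^((k:ℤ)-1-(m:ℤ))
          + b k * ((m:ℝ)+1-(k:ℝ)) * GG s k η * (ξ-η)^((k:ℤ)-1-(m:ℤ)-1)) η := by
      intro k _
      have h2 : HasDerivAt (fun η' : ℝ => (ξ-η')^((k:ℤ)-1-(m:ℤ)))
          ((((k:ℤ)-1-(m:ℤ) : ℤ):ℝ) * (ξ-η)^((k:ℤ)-1-(m:ℤ)-1) * (-1)) η :=
        (hasDerivAt_zpow _ _ (Or.inl hX)).comp η hone
      have h3 := ((GG_hasDerivAt s k hη).const_mul (b k)).mul h2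
      refine h3.congr_deriv ?_
      push_cast
      ring
    have hsum := (HasDerivAt.fun_sum hA).fun_add (HasDerivAt.fun_sum hB)
    rw [hsum.deriv]
    -- now pure algebra
    rw [Finset.sum_range_one]
    -- compute RHS
    have key : (∑ k ∈ Finset.range (m+1+1),
          ((if k = 0 then 0 else b (k-1)) + b k * ((m:ℝ)+1-(k:ℝ))) * GG s k η
            * (ξ-η)^((k:ℤ)-1-((m+1:ℕ):ℤ)))
        = (∑ k ∈ Finset.range (m+1), b k * GG s (k+1) η * (ξ-η)^((k:ℤ)-1-(m:ℤ)))
          + (∑ k ∈ Finset.range (m+1),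
              b k * ((m:ℝ)+1-(k:ℝ)) * GG s k η * (ξ-η)^((k:ℤ)-1-(m:ℤ)-1)) := by
      have hsplit : ∀ k ∈ Finset.range (m+1+1),
          ((if k = 0 then 0 else b (k-1)) + b k * ((m:ℝ)+1-(k:ℝ))) * GG s k η
            * (ξ-η)^((k:ℤ)-1-((m+1:ℕ):ℤ))
          = (if k = 0 then 0 else b (k-1)) * GG s k η * (ξ-η)^((k:ℤ)-1-((m+1:ℕ):ℤ))
            + b k * ((m:ℝ)+1-(k:ℝ)) * GG s k η * (ξ-η)^((k:ℤ)-1-((m+1:ℕ):ℤ)) := by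
        intro k _; ring
      rw [Finset.sum_congr rfl hsplit, Finset.sum_add_distrib]
      congr 1
      · rw [Finset.sum_range_succ']
        simp only [Nat.add_sub_cancel, if_neg (Nat.succ_ne_zero _), if_pos rfl]
        norm_num
        apply Finset.sum_congr rfl
        intro k _
        congr 1
        push_cast
        ring
      · rw [Finset.sum_range_succ]
        have hz : ((m:ℝ)+1-((m+1:ℕ):ℝ)) = 0 := by push_cast; ring
        rw [hz, mul_zero, zero_mul, zero_mul, add_zero]
        apply Finset.sum_congr rfl
        intro k _
        have : (k:ℤ)-1-((m+1:ℕ):ℤ) = (k:ℤ)-1-(m:ℤ)-1 := by push_cast; ring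
        rw [this]
    rw [Finset.sum_range_one, key]
    have : ((0:ℕ):ℤ)-1-((m+1:ℕ):ℤ) = ((0:ℕ):ℤ)-1-(m:ℤ)-1 := by push_cast; ring
    rw [this, Finset.sum_add_distrib]
    push_cast
    ring

lemma outer_formula {s : ℝ} (hs : 0 < s) (m₁ m₂ : ℕ) :
    ∃ a b : ℕ → ℝ, (∀ j, m₁ < j → a j = 0) ∧ ∀ ξ η : ℝ, ξ ≠ 0 → η ≠ 0 → ξ ≠ η →
      iteratedDeriv m₁ (fun ξ' => iteratedDeriv m₂ (fun η' => Mker s ξ' η') η) ξ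
      = (∑ j ∈ Finset.range (m₁+1), a j * GG s j ξ * (ξ-η)^((j:ℤ)-1-(m₁:ℤ)-(m₂:ℤ)))
      + (∑ k ∈ Finset.range (m₂+1), b k * GG s k η * (ξ-η)^((k:ℤ)-1-(m₁:ℤ)-(m₂:ℤ))) := by
  induction m₁ with
  | zero =>
    obtain ⟨a, b, ha, hab⟩ := inner_formula hs m₂
    refine ⟨a, b, fun j hj => ha j hj, ?_⟩
    intro ξ η hξ hη hne
    simp only [iteratedDeriv_zero]
    rw [hab ξ η hη hne]
    simp only [Nat.cast_zero, sub_zero]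
  | succ n ih =>
    obtain ⟨a, b, ha, hab⟩ := ih
    refine ⟨fun j => (if j = 0 then 0 else a (j-1)) + a j * ((j:ℝ)-1-(n:ℝ)-(m₂:ℝ)),
      fun k => b k * ((k:ℝ)-1-(n:ℝ)-(m₂:ℝ)), ?_, ?_⟩
    · intro j hj
      have h1 : a (j-1) = 0 := ha _ (by omega)
      have h2 : a j = 0 := ha _ (by omega)
      simp [h1, h2]
    intro ξ η hξ hη hne
    have hX : ξ - η ≠ 0 := sub_ne_zero.2 hne
    rw [iteratedDeriv_succ]
    have he : iteratedDeriv n (fun ξ' => iteratedDeriv m₂ (fun η' => Mker s ξ' η') η)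
        =ᶠ[nhds ξ]
        (fun ξ' => (∑ j ∈ Finset.range (n+1), a j * GG s j ξ' * (ξ'-η)^((j:ℤ)-1-(n:ℤ)-(m₂:ℤ)))
          + (∑ k ∈ Finset.range (m₂+1), b k * GG s k η * (ξ'-η)^((k:ℤ)-1-(n:ℤ)-(m₂:ℤ)))) := by
      filter_upwards [eventually_ne_nhds hξ, eventually_ne_nhds hne] with y h1 h2
      exact hab y η h1 hη h2
    rw [he.deriv_eq]
    have hone : HasDerivAt (fun ξ' : ℝ => ξ' - η) 1 ξ := (hasDerivAt_id ξ).sub_const η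
    have hA : ∀ j ∈ Finset.range (n+1), HasDerivAt
        (fun ξ' => a j * GG s j ξ' * (ξ'-η)^((j:ℤ)-1-(n:ℤ)-(m₂:ℤ)))
        (a j * GG s (j+1) ξ * (ξ-η)^((j:ℤ)-1-(n:ℤ)-(m₂:ℤ))
          + a j * ((j:ℝ)-1-(n:ℝ)-(m₂:ℝ)) * GG s j ξ * (ξ-η)^((j:ℤ)-1-(n:ℤ)-(m₂:ℤ)-1)) ξ := by
      intro j _
      have h2 : HasDerivAt (fun ξ' : ℝ => (ξ'-η)^((j:ℤ)-1-(n:ℤ)-(m₂:ℤ)))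
          ((((j:ℤ)-1-(n:ℤ)-(m₂:ℤ) : ℤ):ℝ) * (ξ-η)^((j:ℤ)-1-(n:ℤ)-(m₂:ℤ)-1) * 1) ξ :=
        by have := (hasDerivAt_zpow ((j:ℤ)-1-(n:ℤ)-(m₂:ℤ)) (ξ-η) (Or.inl hX)).comp ξ hone; exact this
      have h3 := ((GG_hasDerivAt s j hξ).const_mul (a j)).mul h2
      refine h3.congr_deriv ?_
      push_cast
      ring
    have hB : ∀ k ∈ Finset.range (m₂+1), HasDerivAt
        (fun ξ' => b k * GG s k η * (ξ'-η)^((k:ℤ)-1-(n:ℤ)-(m₂:ℤ)))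
        (b k * ((k:ℝ)-1-(n:ℝ)-(m₂:ℝ)) * GG s k η * (ξ-η)^((k:ℤ)-1-(n:ℤ)-(m₂:ℤ)-1)) ξ := by
      intro k _
      have h2 : HasDerivAt (fun ξ' : ℝ => (ξ'-η)^((k:ℤ)-1-(n:ℤ)-(m₂:ℤ)))
          ((((k:ℤ)-1-(n:ℤ)-(m₂:ℤ) : ℤ):ℝ) * (ξ-η)^((k:ℤ)-1-(n:ℤ)-(m₂:ℤ)-1) * 1) ξ :=
        by have := (hasDerivAt_zpow ((k:ℤ)-1-(n:ℤ)-(m₂:ℤ)) (ξ-η) (Or.inl hX)).comp ξ hone; exact this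
      have h3 := h2.const_mul (b k * GG s k η)
      refine h3.congr_deriv ?_
      push_cast
      ring
    rw [((HasDerivAt.fun_sum hA).fun_add (HasDerivAt.fun_sum hB)).deriv]
    have key : (∑ j ∈ Finset.range (n+1+1),
          ((if j = 0 then 0 else a (j-1)) + a j * ((j:ℝ)-1-(n:ℝ)-(m₂:ℝ))) * GG s j ξ
            * (ξ-η)^((j:ℤ)-1-((n+1:ℕ):ℤ)-(m₂:ℤ)))
        = (∑ j ∈ Finset.range (n+1), a j * GG s (j+1) ξ * (ξ-η)^((j:ℤ)-1-(n:ℤ)-(m₂:ℤ)))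
          + (∑ j ∈ Finset.range (n+1),
              a j * ((j:ℝ)-1-(n:ℝ)-(m₂:ℝ)) * GG s j ξ * (ξ-η)^((j:ℤ)-1-(n:ℤ)-(m₂:ℤ)-1)) := by
      have hsplit : ∀ j ∈ Finset.range (n+1+1),
          ((if j = 0 then 0 else a (j-1)) + a j * ((j:ℝ)-1-(n:ℝ)-(m₂:ℝ))) * GG s j ξ
            * (ξ-η)^((j:ℤ)-1-((n+1:ℕ):ℤ)-(m₂:ℤ))
          = (if j = 0 then 0 else a (j-1)) * GG s j ξ * (ξ-η)^((j:ℤ)-1-((n+1:ℕ):ℤ)-(m₂:ℤ))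
            + a j * ((j:ℝ)-1-(n:ℝ)-(m₂:ℝ)) * GG s j ξ * (ξ-η)^((j:ℤ)-1-((n+1:ℕ):ℤ)-(m₂:ℤ)) := by
        intro j _; ring
      rw [Finset.sum_congr rfl hsplit, Finset.sum_add_distrib]
      congr 1
      · rw [Finset.sum_range_succ']
        simp only [Nat.add_sub_cancel, if_neg (Nat.succ_ne_zero _), if_pos rfl]
        norm_num
        apply Finset.sum_congr rfl
        intro j _
        congr 1
        push_cast
        ring
      · rw [Finset.sum_range_succ]
        rw [ha (n+1) (by omega)]
        norm_num
        apply Finset.sum_congr rfl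
        intro j _
        congr 1
        push_cast
        ring
    rw [key, Finset.sum_add_distrib]
    have keyb : (∑ k ∈ Finset.range (m₂+1),
          b k * ((k:ℝ)-1-(n:ℝ)-(m₂:ℝ)) * GG s k η * (ξ-η)^((k:ℤ)-1-((n+1:ℕ):ℤ)-(m₂:ℤ)))
        = (∑ k ∈ Finset.range (m₂+1),
            b k * ((k:ℝ)-1-(n:ℝ)-(m₂:ℝ)) * GG s k η * (ξ-η)^((k:ℤ)-1-(n:ℤ)-(m₂:ℤ)-1)) := by
      apply Finset.sum_congr rfl
      intro k _
      congr 1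
      push_cast
      ring
    rw [keyb]

theorem stmt9 (s : ℝ) (hs : 0 < s) (hs1 : s < 1) (m₁ m₂ : ℕ) :
    ∃ C > (0:ℝ), ∀ ξ η : ℝ, ξ ≠ 0 → η ≠ 0 → 4 * |η| ≤ |ξ| →
      |iteratedDeriv m₁ (fun ξ' => iteratedDeriv m₂ (fun η' => Mker s ξ' η') η) ξ|
        ≤ C * (|ξ| ^ (2 * s - m₁ - m₂) + |η| ^ (2 * s + 1 - m₂) / |ξ| ^ ((m₁ : ℝ) + 1)) := by
  obtain ⟨a, b, ha, hab⟩ := outer_formula hs m₁ m₂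
  set K : ℝ := (3/4:ℝ) ^ (-((m₁:ℝ)+(m₂:ℝ)+1)) with hK
  have hKpos : 0 < K := Real.rpow_pos_of_pos (by norm_num) _
  refine ⟨(∑ j ∈ Finset.range (m₁+1), |a j| * |Ac s j| * K)
    + (∑ k ∈ Finset.range (m₂+1), |b k| * |Ac s k| * K) + 1, by positivity, ?_⟩
  intro ξ η hξ hη h4
  have hξa : 0 < |ξ| := abs_pos.2 hξ
  have hηa : 0 < |η| := abs_pos.2 hη
  have hne : ξ ≠ η := by
    intro h
    rw [h] at h4
    nlinarith
  have hXl : 3/4 * |ξ| ≤ |ξ - η| := by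
    have := abs_sub_abs_le_abs_sub ξ η
    linarith
  have hXpos : 0 < |ξ - η| := by linarith
  rw [hab ξ η hξ hη hne]
  set P₁ : ℝ := |ξ| ^ (2 * s - m₁ - m₂) with hP1def
  set P₂ : ℝ := |η| ^ (2 * s + 1 - m₂) / |ξ| ^ ((m₁ : ℝ) + 1) with hP2def
  have hP1 : (0:ℝ) ≤ P₁ := Real.rpow_nonneg (abs_nonneg _) _
  have hP2 : (0:ℝ) ≤ P₂ := by positivity
  have hXbound : ∀ c : ℕ, c ≤ m₁ + m₂ →
      |ξ-η| ^ ((c:ℝ)-1-m₁-m₂) ≤ K * |ξ| ^ ((c:ℝ)-1-m₁-m₂) := by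
    intro c hc
    have hcr : (c:ℝ) ≤ m₁ + m₂ := by exact_mod_cast hc
    have hexp : ((c:ℝ)-1-m₁-m₂) ≤ 0 := by linarith
    have h5 : |ξ-η| ^ ((c:ℝ)-1-m₁-m₂) ≤ (3/4*|ξ|) ^ ((c:ℝ)-1-m₁-m₂) :=
      Real.rpow_le_rpow_of_nonpos (by positivity) hXl hexp
    have h6 : (3/4*|ξ|) ^ ((c:ℝ)-1-m₁-m₂)
        = (3/4:ℝ)^((c:ℝ)-1-m₁-m₂) * |ξ|^((c:ℝ)-1-m₁-m₂) :=
      Real.mul_rpow (by norm_num) (abs_nonneg _)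
    have h7 : (3/4:ℝ)^((c:ℝ)-1-m₁-m₂) ≤ K := by
      apply Real.rpow_le_rpow_of_exponent_ge (by norm_num) (by norm_num)
      have : (0:ℝ) ≤ (c:ℝ) := Nat.cast_nonneg c
      linarith
    calc |ξ-η| ^ ((c:ℝ)-1-m₁-m₂) ≤ (3/4:ℝ)^((c:ℝ)-1-m₁-m₂) * |ξ|^((c:ℝ)-1-m₁-m₂) := by
          rw [← h6]; exact h5
      _ ≤ K * |ξ| ^ ((c:ℝ)-1-m₁-m₂) :=
          mul_le_mul_of_nonneg_right h7 (Real.rpow_nonneg (abs_nonneg _) _)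
  have habsz : ∀ (x:ℝ) (n:ℤ), |x ^ n| = |x| ^ n := by
    intro x n
    rw [← Real.norm_eq_abs, ← Real.norm_eq_abs, norm_zpow]
  have hzp : ∀ c : ℕ, |ξ-η| ^ ((c:ℤ)-1-(m₁:ℤ)-(m₂:ℤ)) = |ξ-η| ^ ((c:ℝ)-1-m₁-m₂) := by
    intro c
    rw [← Real.rpow_intCast]
    congr 1
    push_cast
    ring
  have hTj : ∀ j ∈ Finset.range (m₁+1),
      |a j * GG s j ξ * (ξ-η)^((j:ℤ)-1-(m₁:ℤ)-(m₂:ℤ))| ≤ |a j| * |Ac s j| * K * P₁ := by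
    intro j hj
    have hjm : j ≤ m₁ := Nat.lt_succ_iff.mp (Finset.mem_range.mp hj)
    rw [abs_mul, abs_mul, GG_abs s j hξ, habsz, hzp j]
    calc |a j| * (|Ac s j| * |ξ|^(2*s+1-j)) * |ξ-η|^((j:ℝ)-1-m₁-m₂)
        ≤ |a j| * (|Ac s j| * |ξ|^(2*s+1-j)) * (K * |ξ|^((j:ℝ)-1-m₁-m₂)) :=
          mul_le_mul_of_nonneg_left (hXbound j (by omega)) (by positivity)
      _ = |a j| * |Ac s j| * K * (|ξ|^(2*s+1-j) * |ξ|^((j:ℝ)-1-m₁-m₂)) := by ring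
      _ = |a j| * |Ac s j| * K * P₁ := by
          rw [← Real.rpow_add hξa, hP1def]
          congr 2
          ring
  have hTk : ∀ k ∈ Finset.range (m₂+1),
      |b k * GG s k η * (ξ-η)^((k:ℤ)-1-(m₁:ℤ)-(m₂:ℤ))| ≤ |b k| * |Ac s k| * K * P₂ := by
    intro k hk
    have hkm : k ≤ m₂ := Nat.lt_succ_iff.mp (Finset.mem_range.mp hk)
    have hkr : (k:ℝ) ≤ m₂ := by exact_mod_cast hkm
    rw [abs_mul, abs_mul, GG_abs s k hη, habsz, hzp k]
    have hsplit : |η|^(2*s+1-k) = |η|^(2*s+1-m₂) * |η|^((m₂:ℝ)-k) := by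
      rw [← Real.rpow_add hηa]
      congr 1
      ring
    have hmono : |η|^((m₂:ℝ)-k) ≤ |ξ|^((m₂:ℝ)-k) :=
      Real.rpow_le_rpow (abs_nonneg _) (by linarith) (by linarith)
    calc |b k| * (|Ac s k| * |η|^(2*s+1-k)) * |ξ-η|^((k:ℝ)-1-m₁-m₂)
        ≤ |b k| * (|Ac s k| * |η|^(2*s+1-k)) * (K * |ξ|^((k:ℝ)-1-m₁-m₂)) :=
          mul_le_mul_of_nonneg_left (hXbound k (by omega)) (by positivity)
      _ = |b k| * |Ac s k| * K * (|η|^(2*s+1-m₂) * (|η|^((m₂:ℝ)-k) * |ξ|^((k:ℝ)-1-m₁-m₂))) := by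
          rw [hsplit]; ring
      _ ≤ |b k| * |Ac s k| * K * (|η|^(2*s+1-m₂) * (|ξ|^((m₂:ℝ)-k) * |ξ|^((k:ℝ)-1-m₁-m₂))) := by
          apply mul_le_mul_of_nonneg_left _ (by positivity)
          apply mul_le_mul_of_nonneg_left _ (Real.rpow_nonneg (abs_nonneg _) _)
          exact mul_le_mul_of_nonneg_right hmono (Real.rpow_nonneg (abs_nonneg _) _)
      _ = |b k| * |Ac s k| * K * P₂ := by
          rw [← Real.rpow_add hξa, hP2def]
          rw [show ((m₂:ℝ)-k) + ((k:ℝ)-1-m₁-m₂) = -((m₁:ℝ)+1) by ring]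
          rw [Real.rpow_neg (abs_nonneg _), div_eq_mul_inv]
  have habs : |(∑ j ∈ Finset.range (m₁+1), a j * GG s j ξ * (ξ-η)^((j:ℤ)-1-(m₁:ℤ)-(m₂:ℤ)))
      + (∑ k ∈ Finset.range (m₂+1), b k * GG s k η * (ξ-η)^((k:ℤ)-1-(m₁:ℤ)-(m₂:ℤ)))|
      ≤ (∑ j ∈ Finset.range (m₁+1), |a j| * |Ac s j| * K) * P₁
        + (∑ k ∈ Finset.range (m₂+1), |b k| * |Ac s k| * K) * P₂ := by
    apply (abs_add_le _ _).trans
    rw [Finset.sum_mul, Finset.sum_mul]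
    exact add_le_add
      ((Finset.abs_sum_le_sum_abs _ _).trans (Finset.sum_le_sum hTj))
      ((Finset.abs_sum_le_sum_abs _ _).trans (Finset.sum_le_sum hTk))
  apply habs.trans
  have hca : (0:ℝ) ≤ ∑ j ∈ Finset.range (m₁+1), |a j| * |Ac s j| * K := by positivity
  have hcb : (0:ℝ) ≤ ∑ k ∈ Finset.range (m₂+1), |b k| * |Ac s k| * K := by positivity
  nlinarith [mul_nonneg hca hP2, mul_nonneg hcb hP1]
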